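/- For all r ≥ 0, ρ > 0 and a, s ∈ ℝ: z(a,s,r,ρ) + a = 0 if and only if a ≤ 0, s ≥ 0 and s·a = −r. -/

import Mathlib

/-- `z(a,s,r,ρ)` from the smoothing barrier augmented Lagrangian method. -/
noncomputable def zfun (a s r ρ : ℝ) : ℝ :=
  (1 / 2) * (Real.sqrt ((ρ * s + a) ^ 2 + 4 * r * ρ) - (ρ * s + a))

/-- `κ(a,s,r,ρ)` from the smoothing barrier augmented Lagrangian method. -/
noncomputable def kfun (a s r ρ : ℝ) : ℝ :=
  (1 / 2) * (Real.sqrt ((ρ * s + a) ^ 2 + 4 * r * ρ) + (ρ * s + a))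

/-! The discriminant splits as `(ρs + a)² + 4rρ = (ρs - a)² + 4ρ(sa + r)`, so `z + a = 0`, i.e.
`√((ρs + a)² + 4rρ) = ρs - a`, says exactly that `ρs - a ≥ 0` and `sa = -r`. Since `r ≥ 0`
makes `sa ≤ 0`, the sign condition `ρs ≥ a` is then equivalent to `a ≤ 0 ≤ s`. -/

theorem Real.sqrt_eq_iff_of_nonneg {x y : ℝ} (hx : 0 ≤ x) : √x = y ↔ 0 ≤ y ∧ y ^ 2 = x := by
  constructor
  · rintro rfl
    exact ⟨Real.sqrt_nonneg x, Real.sq_sqrt hx⟩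
  · rintro ⟨hy, rfl⟩
    exact Real.sqrt_sq hy

theorem zfun_add_eq_zero_iff (a s r ρ : ℝ) :
    zfun a s r ρ + a = 0 ↔ √((ρ * s + a) ^ 2 + 4 * r * ρ) = ρ * s - a := by
  unfold zfun
  constructor <;> intro h <;> linarith

theorem sq_sub_eq_add_sq_add_iff {ρ : ℝ} (hρ : ρ ≠ 0) (a s r : ℝ) :
    (ρ * s - a) ^ 2 = (ρ * s + a) ^ 2 + 4 * r * ρ ↔ s * a = -r := by
  rw [← sub_eq_zero, ← sub_eq_zero (a := s * a),
    show (ρ * s - a) ^ 2 - ((ρ * s + a) ^ 2 + 4 * r * ρ) = -(4 * ρ) * (s * a - -r) by ring,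
    mul_eq_zero, or_iff_right (by simpa using hρ)]

theorem mul_sub_nonneg_iff_of_mul_nonpos {ρ a s : ℝ} (hρ : 0 < ρ) (hsa : s * a ≤ 0) :
    0 ≤ ρ * s - a ↔ a ≤ 0 ∧ 0 ≤ s := by
  constructor
  · intro h
    constructor
    · by_contra! ha
      have hs : 0 < s := pos_of_mul_pos_right (by linarith) hρ.le
      exact (mul_pos hs ha).not_ge hsa
    · by_contra! hs
      have ha : a < 0 := by linarith [mul_neg_of_pos_of_neg hρ hs]
      exact (mul_pos_of_neg_of_neg hs ha).not_ge hsa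
  · rintro ⟨ha, hs⟩
    linarith [mul_nonneg hρ.le hs]

/-- for all `r ≥ 0`, `ρ > 0` and `a s : ℝ`,
`z(a,s,r,ρ) + a = 0` if and only if `a ≤ 0`, `s ≥ 0` and `s·a = −r`. -/
theorem z_plus_a_eq_zero_iff (r ρ a s : ℝ) (hr : 0 ≤ r) (hρ : 0 < ρ) :
    zfun a s r ρ + a = 0 ↔ a ≤ 0 ∧ 0 ≤ s ∧ s * a = -r := by
  rw [zfun_add_eq_zero_iff, Real.sqrt_eq_iff_of_nonneg (by positivity),
    sq_sub_eq_add_sq_add_iff hρ.ne', ← and_assoc]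
  exact and_congr_left fun hsa ↦ mul_sub_nonneg_iff_of_mul_nonpos hρ (hsa ▸ neg_nonpos.2 hr)
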